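/- arXiv:2406.09958 — 5 statements merged into one kernel-verified Lean document; each statement's English description precedes it below -/
import Mathlib

section
/- Along the trajectory of the factorized-momentum ODE dW/dt = -(β û 1_nᵀ + G) - (β 1_m v̂ᵀ + G), du/dt = G1_n/n - αu, dv/dt = Gᵀ1_m/m - αv, with û = u - G1_n/n, v̂ = v - Gᵀ1_m/m and G = ∇f(W), the Hamiltonian H(W,u,v) = f(W) + (βn/2)‖u‖₂² + (βm/2)‖v‖₂² satisfies dH/dt ≤ -2‖G‖²_F + (1/n)‖G1_n‖₂² + (1/m)‖Gᵀ1_m‖₂² ≤ 0, assuming β ∈ (0,1) and α > 0. -/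
/-!
Differentiating `H` along the flow, the cross terms `β⟪u, G1⟫` and `β⟪v, Gᵀ1⟫` produced by `f`
cancel against those produced by the momenta, leaving
`dH/dt = -2‖G‖² + (β/n)‖G1‖² + (β/m)‖Gᵀ1‖² - αβn‖u‖² - αβm‖v‖²`.
Dropping the friction terms and using `β ≤ 1` gives the first bound; Cauchy–Schwarz,
`‖G1‖² ≤ n‖G‖²` and `‖Gᵀ1‖² ≤ m‖G‖²`, gives the second.
-/

open Finset

theorem HasGradientAt.comp_hasDerivAt {F : Type*} [NormedAddCommGroup F] [InnerProductSpace ℝ F]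
    [CompleteSpace F] {f : F → ℝ} {g : F} {W : ℝ → F} {W' : F} {t : ℝ}
    (hf : HasGradientAt f g (W t)) (hW : HasDerivAt W W' t) :
    HasDerivAt (fun τ => f (W τ)) (inner ℝ g W') t := by
  have h := hf.hasFDerivAt.comp_hasDerivAt t hW
  rwa [InnerProductSpace.toDual_apply_apply] at h

section

variable {ι κ : Type*} [Fintype ι] [Fintype κ]

theorem card_mul_sum_div_card (x : κ → ℝ) :
    (Fintype.card κ : ℝ) * ((∑ j, x j) / Fintype.card κ) = ∑ j, x j := by
  rw [← Fintype.expect_eq_sum_div_card, Fintype.card_mul_expect]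

theorem one_div_card_mul_sq_sum_le_sum_sq (x : κ → ℝ) :
    1 / (Fintype.card κ : ℝ) * (∑ j, x j) ^ 2 ≤ ∑ j, x j ^ 2 := by
  rcases isEmpty_or_nonempty κ with hκ | hκ
  · simp
  · rw [one_div_mul_eq_div, div_le_iff₀' (by positivity)]
    exact sq_sum_le_card_mul_sum_sq

theorem sum_momentum_coupling_eq (r u : ι → ℝ) (n α β : ℝ)
    (hr : ∀ i, n * (r i / n) = r i) :
    β * n / 2 * (2 * ∑ i, (r i / n - α * u i) * u i) - ∑ i, β * (u i - r i / n) * r i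
      = β / n * ∑ i, r i ^ 2 - α * β * n * ∑ i, u i ^ 2 := by
  simp only [mul_sum, ← sum_sub_distrib]
  refine sum_congr rfl fun i _ => ?_
  linear_combination (β * u i) * hr i

theorem one_div_card_mul_sum_sq_rowSum_le (G : ι × κ → ℝ) :
    1 / (Fintype.card κ : ℝ) * ∑ i, (∑ j, G (i, j)) ^ 2 ≤ ∑ p, G p ^ 2 := by
  rw [mul_sum, Fintype.sum_prod_type]
  gcongr with i
  exact one_div_card_mul_sq_sum_le_sum_sq _

theorem one_div_card_mul_sum_sq_colSum_le (G : ι × κ → ℝ) :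
    1 / (Fintype.card ι : ℝ) * ∑ j, (∑ i, G (i, j)) ^ 2 ≤ ∑ p, G p ^ 2 := by
  rw [mul_sum, Fintype.sum_prod_type_right]
  gcongr with j
  exact one_div_card_mul_sq_sum_le_sum_sq _

theorem neg_two_mul_sum_sq_add_sum_sq_rowSum_add_sum_sq_colSum_nonpos (G : ι × κ → ℝ) :
    -2 * ∑ p, G p ^ 2 + 1 / (Fintype.card κ : ℝ) * ∑ i, (∑ j, G (i, j)) ^ 2
      + 1 / (Fintype.card ι : ℝ) * ∑ j, (∑ i, G (i, j)) ^ 2 ≤ 0 := by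
  linarith [one_div_card_mul_sum_sq_rowSum_le G, one_div_card_mul_sum_sq_colSum_le G]

theorem sum_neg_add_sub_add_mul_eq (G : ι × κ → ℝ) (a : ι → ℝ) (b : κ → ℝ) :
    ∑ p, (-(a p.1 + G p) - (b p.2 + G p)) * G p
      = -∑ i, a i * ∑ j, G (i, j) - ∑ j, b j * ∑ i, G (i, j) - 2 * ∑ p, G p ^ 2 := by
  have hrow : ∑ p, a p.1 * G p = ∑ i, a i * ∑ j, G (i, j) := by
    simp only [Fintype.sum_prod_type, mul_sum]
  have hcol : ∑ p, b p.2 * G p = ∑ j, b j * ∑ i, G (i, j) := by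
    simp only [Fintype.sum_prod_type_right, mul_sum]
  rw [← hrow, ← hcol, mul_sum, ← sum_neg_distrib, ← sum_sub_distrib, ← sum_sub_distrib]
  exact sum_congr rfl fun p _ => by ring

theorem hamiltonian_deriv_eq (G : ι × κ → ℝ) (u : ι → ℝ) (v : κ → ℝ) (α β : ℝ) :
    ∑ p, (-(β * (u p.1 - (∑ j, G (p.1, j)) / Fintype.card κ) + G p)
          - (β * (v p.2 - (∑ i, G (i, p.2)) / Fintype.card ι) + G p)) * G p
      + β * Fintype.card κ / 2
          * (2 * ∑ i, ((∑ j, G (i, j)) / Fintype.card κ - α * u i) * u i)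
      + β * Fintype.card ι / 2
          * (2 * ∑ j, ((∑ i, G (i, j)) / Fintype.card ι - α * v j) * v j)
    = -2 * ∑ p, G p ^ 2
      + β / Fintype.card κ * ∑ i, (∑ j, G (i, j)) ^ 2
      + β / Fintype.card ι * ∑ j, (∑ i, G (i, j)) ^ 2
      - α * β * Fintype.card κ * ∑ i, u i ^ 2 - α * β * Fintype.card ι * ∑ j, v j ^ 2 := by
  have hW := sum_neg_add_sub_add_mul_eq G
    (fun i => β * (u i - (∑ j, G (i, j)) / Fintype.card κ))
    (fun j => β * (v j - (∑ i, G (i, j)) / Fintype.card ι))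
  have hu := sum_momentum_coupling_eq (fun i => ∑ j, G (i, j)) u (Fintype.card κ) α β
    fun i => card_mul_sum_div_card _
  have hv := sum_momentum_coupling_eq (fun j => ∑ i, G (i, j)) v (Fintype.card ι) α β
    fun j => card_mul_sum_div_card _
  linarith

theorem hamiltonian_deriv_le (G : ι × κ → ℝ) (u : ι → ℝ) (v : κ → ℝ) {α β : ℝ}
    (hα : 0 ≤ α) (hβ₀ : 0 ≤ β) (hβ₁ : β ≤ 1) :
    ∑ p, (-(β * (u p.1 - (∑ j, G (p.1, j)) / Fintype.card κ) + G p)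
          - (β * (v p.2 - (∑ i, G (i, p.2)) / Fintype.card ι) + G p)) * G p
      + β * Fintype.card κ / 2
          * (2 * ∑ i, ((∑ j, G (i, j)) / Fintype.card κ - α * u i) * u i)
      + β * Fintype.card ι / 2
          * (2 * ∑ j, ((∑ i, G (i, j)) / Fintype.card ι - α * v j) * v j)
    ≤ -2 * ∑ p, G p ^ 2
      + 1 / (Fintype.card κ : ℝ) * ∑ i, (∑ j, G (i, j)) ^ 2
      + 1 / (Fintype.card ι : ℝ) * ∑ j, (∑ i, G (i, j)) ^ 2 := by
  rw [hamiltonian_deriv_eq]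
  have hrow : β / Fintype.card κ * ∑ i, (∑ j, G (i, j)) ^ 2
      ≤ 1 / (Fintype.card κ : ℝ) * ∑ i, (∑ j, G (i, j)) ^ 2 := by gcongr
  have hcol : β / Fintype.card ι * ∑ j, (∑ i, G (i, j)) ^ 2
      ≤ 1 / (Fintype.card ι : ℝ) * ∑ j, (∑ i, G (i, j)) ^ 2 := by gcongr
  have hu : 0 ≤ α * β * Fintype.card κ * ∑ i, u i ^ 2 := by positivity
  have hv : 0 ≤ α * β * Fintype.card ι * ∑ j, v j ^ 2 := by positivity
  linarith

end

theorem stmt_3_general (m n : ℕ)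
    (f : EuclideanSpace ℝ (Fin m × Fin n) → ℝ)
    (g : EuclideanSpace ℝ (Fin m × Fin n) → EuclideanSpace ℝ (Fin m × Fin n))
    (hf : ∀ x, HasGradientAt f (g x) x)
    (α β : ℝ) (hα : 0 < α) (hβ : β ∈ Set.Ioo (0 : ℝ) 1)
    (W : ℝ → EuclideanSpace ℝ (Fin m × Fin n))
    (u : ℝ → EuclideanSpace ℝ (Fin m))
    (v : ℝ → EuclideanSpace ℝ (Fin n))
    (hW : ∀ t, HasDerivAt W
      (WithLp.toLp 2 fun p : Fin m × Fin n =>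
        -(β * (u t p.1 - (∑ j, g (W t) (p.1, j)) / n) + g (W t) p)
        - (β * (v t p.2 - (∑ i, g (W t) (i, p.2)) / m) + g (W t) p)) t)
    (hu : ∀ t, HasDerivAt u
      (WithLp.toLp 2 fun i : Fin m => (∑ j, g (W t) (i, j)) / n - α * u t i) t)
    (hv : ∀ t, HasDerivAt v
      (WithLp.toLp 2 fun j : Fin n => (∑ i, g (W t) (i, j)) / m - α * v t j) t)
    (t : ℝ) :
    ∃ d : ℝ,
      HasDerivAt (fun τ => f (W τ) + (β * n / 2) * ‖u τ‖ ^ 2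
        + (β * m / 2) * ‖v τ‖ ^ 2) d t ∧
      d ≤ -2 * (∑ p : Fin m × Fin n, (g (W t) p) ^ 2)
          + (1 / n) * ∑ i, (∑ j, g (W t) (i, j)) ^ 2
          + (1 / m) * ∑ j, (∑ i, g (W t) (i, j)) ^ 2 ∧
      -2 * (∑ p : Fin m × Fin n, (g (W t) p) ^ 2)
          + (1 / n) * ∑ i, (∑ j, g (W t) (i, j)) ^ 2
          + (1 / m) * ∑ j, (∑ i, g (W t) (i, j)) ^ 2 ≤ 0 := by
  have hH := (((hf (W t)).comp_hasDerivAt (hW t)).add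
    (((hu t).norm_sq).const_mul (β * n / 2))).add (((hv t).norm_sq).const_mul (β * m / 2))
  simp only [PiLp.inner_apply, RCLike.inner_apply, conj_trivial] at hH
  refine ⟨_, hH, ?_, ?_⟩
  · simpa only [Fintype.card_fin] using
      hamiltonian_deriv_le (g (W t)) (u t) (v t) hα.le hβ.1.le hβ.2.le
  · simpa only [Fintype.card_fin] using
      neg_two_mul_sum_sq_add_sum_sq_rowSum_add_sum_sq_colSum_nonpos (g (W t))

/-- Along the factorized-momentum ODE, the Hamiltonian
`H(W,u,v) = f(W) + (βn/2)‖u‖² + (βm/2)‖v‖²` satisfies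
`dH/dt ≤ -2‖G‖²_F + (1/n)‖G1_n‖² + (1/m)‖Gᵀ1_m‖² ≤ 0`. -/
theorem stmt_3 (m n : ℕ) (hm : 0 < m) (hn : 0 < n)
    (f : EuclideanSpace ℝ (Fin m × Fin n) → ℝ)
    (g : EuclideanSpace ℝ (Fin m × Fin n) → EuclideanSpace ℝ (Fin m × Fin n))
    (hf : ∀ x, HasGradientAt f (g x) x)
    (α β : ℝ) (hα : 0 < α) (hβ : β ∈ Set.Ioo (0 : ℝ) 1)
    (W : ℝ → EuclideanSpace ℝ (Fin m × Fin n))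
    (u : ℝ → EuclideanSpace ℝ (Fin m))
    (v : ℝ → EuclideanSpace ℝ (Fin n))
    (hW : ∀ t, HasDerivAt W
      (WithLp.toLp 2 fun p : Fin m × Fin n =>
        -(β * (u t p.1 - (∑ j, g (W t) (p.1, j)) / n) + g (W t) p)
        - (β * (v t p.2 - (∑ i, g (W t) (i, p.2)) / m) + g (W t) p)) t)
    (hu : ∀ t, HasDerivAt u
      (WithLp.toLp 2 fun i : Fin m => (∑ j, g (W t) (i, j)) / n - α * u t i) t)
    (hv : ∀ t, HasDerivAt v
      (WithLp.toLp 2 fun j : Fin n => (∑ i, g (W t) (i, j)) / m - α * v t j) t)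
    (t : ℝ) :
    ∃ d : ℝ,
      HasDerivAt (fun τ => f (W τ) + (β * n / 2) * ‖u τ‖ ^ 2
        + (β * m / 2) * ‖v τ‖ ^ 2) d t ∧
      d ≤ -2 * (∑ p : Fin m × Fin n, (g (W t) p) ^ 2)
          + (1 / n) * ∑ i, (∑ j, g (W t) (i, j)) ^ 2
          + (1 / m) * ∑ j, (∑ i, g (W t) (i, j)) ^ 2 ∧
      -2 * (∑ p : Fin m × Fin n, (g (W t) p) ^ 2)
          + (1 / n) * ∑ i, (∑ j, g (W t) (i, j)) ^ 2
          + (1 / m) * ∑ j, (∑ i, g (W t) (i, j)) ^ 2 ≤ 0 :=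
  stmt_3_general m n f g hf α β hα hβ W u v hW hu hv t
end

section
/- Let V be an m×n matrix with strictly positive entries. The rank-1 matrix r sᵀ with r = V 1_n and s = Vᵀ 1_m / (1_mᵀ V 1_n) minimizes the total elementwise I-divergence Σ_{i,j} d(V_{ij}, r_i s_j) over all componentwise nonnegative vectors r ∈ ℝᵐ, s ∈ ℝⁿ, where d(p,q) = p log(p/q) - p + q. -/
open scoped BigOperators

private lemma sub_le_mul_log {x y : ℝ} (hx : 0 < x) (hy : 0 < y) :
    x - y ≤ x * Real.log (x / y) := by
  have h := Real.log_le_sub_one_of_pos (show 0 < y / x by positivity)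
  have hlog : Real.log (x / y) = - Real.log (y / x) := by
    rw [← Real.log_inv]
    congr 1
    field_simp
  rw [hlog]
  have hxy : x * (y / x) = y := by field_simp
  nlinarith

private lemma term_eq {v ri sj Ri Cj T a : ℝ}
    (hv : 0 < v) (hri : 0 < ri) (hsj : 0 < sj) (hRi : 0 < Ri)
    (hCj : 0 < Cj) (hT : 0 < T) (ha : 0 < a) :
    v * Real.log (v / (ri * sj)) - v + ri * sj
      - (v * Real.log (v / (Ri * (Cj / T))) - v + Ri * (Cj / T))
    = v * Real.log (Ri / (a * ri)) + v * Real.log (a * Cj / (T * sj))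
        + ri * sj - Ri * Cj / T := by
  have h1 : Real.log (v / (ri * sj)) = Real.log v - Real.log ri - Real.log sj := by
    rw [Real.log_div hv.ne' (by positivity), Real.log_mul hri.ne' hsj.ne']; ring
  have h2 : Real.log (v / (Ri * (Cj / T)))
      = Real.log v - Real.log Ri - Real.log Cj + Real.log T := by
    rw [Real.log_div hv.ne' (by positivity), Real.log_mul hRi.ne' (by positivity),
      Real.log_div hCj.ne' hT.ne']; ring
  have h3 : Real.log (Ri / (a * ri)) = Real.log Ri - Real.log a - Real.log ri := by
    rw [Real.log_div hRi.ne' (by positivity), Real.log_mul ha.ne' hri.ne']; ring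
  have h4 : Real.log (a * Cj / (T * sj))
      = Real.log a + Real.log Cj - Real.log T - Real.log sj := by
    rw [Real.log_div (by positivity) (by positivity), Real.log_mul ha.ne' hCj.ne',
      Real.log_mul hT.ne' hsj.ne']; ring
  rw [h1, h2, h3, h4]
  ring

/-- The rank-1 matrix `r sᵀ` with `r = V 1_n` and `s = Vᵀ 1_m / (1_mᵀ V 1_n)`
minimizes the total elementwise I-divergence `Σ_{i,j} d(V_{ij}, r_i s_j)`,
`d(p,q) = p log(p/q) - p + q`, over componentwise positive vectors. -/
theorem stmt_7 (m n : ℕ) (V : Matrix (Fin m) (Fin n) ℝ)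
    (hV : ∀ i j, 0 < V i j)
    (r : Fin m → ℝ) (s : Fin n → ℝ)
    (hr : ∀ i, 0 < r i) (hs : ∀ j, 0 < s j) :
    ∑ i, ∑ j,
        (V i j * Real.log (V i j /
            ((∑ j', V i j') * ((∑ i', V i' j) / (∑ i', ∑ j', V i' j'))))
          - V i j + (∑ j', V i j') * ((∑ i', V i' j) / (∑ i', ∑ j', V i' j')))
      ≤ ∑ i, ∑ j,
          (V i j * Real.log (V i j / (r i * s j)) - V i j + r i * s j) := by
  rcases Nat.eq_zero_or_pos m with rfl | hm
  · simp
  rcases Nat.eq_zero_or_pos n with rfl | hn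
  · simp
  have hnne : (Finset.univ : Finset (Fin n)).Nonempty := ⟨⟨0, hn⟩, Finset.mem_univ _⟩
  have hmne : (Finset.univ : Finset (Fin m)).Nonempty := ⟨⟨0, hm⟩, Finset.mem_univ _⟩
  have hR : ∀ i, 0 < ∑ j, V i j := fun i => Finset.sum_pos (fun j _ => hV i j) hnne
  have hC : ∀ j, 0 < ∑ i, V i j := fun j => Finset.sum_pos (fun i _ => hV i j) hmne
  have hT0 : 0 < ∑ i, ∑ j, V i j := Finset.sum_pos (fun i _ => hR i) hmne
  have ha : 0 < ∑ j, s j := Finset.sum_pos (fun j _ => hs j) hnne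
  set T := ∑ i, ∑ j, V i j with hTdef
  set a := ∑ j, s j with hadef
  have hCT : ∑ j, ∑ i, V i j = T := by rw [hTdef]; exact Finset.sum_comm
  -- step 1: the difference as a double sum of decomposed terms
  have step1 :
      (∑ i, ∑ j, (V i j * Real.log (V i j / (r i * s j)) - V i j + r i * s j))
        - (∑ i, ∑ j,
            (V i j * Real.log (V i j / ((∑ j', V i j') * ((∑ i', V i' j) / T)))
              - V i j + (∑ j', V i j') * ((∑ i', V i' j) / T)))
      = ∑ i, ∑ j,
          (V i j * Real.log ((∑ j', V i j') / (a * r i))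
            + V i j * Real.log (a * (∑ i', V i' j) / (T * s j))
            + r i * s j - (∑ j', V i j') * (∑ i', V i' j) / T) := by
    rw [← Finset.sum_sub_distrib]
    refine Finset.sum_congr rfl fun i _ => ?_
    rw [← Finset.sum_sub_distrib]
    refine Finset.sum_congr rfl fun j _ => ?_
    exact term_eq (hV i j) (hr i) (hs j) (hR i) (hC j) hT0 ha
  -- the four pieces
  have P1 : ∑ i, ∑ j, V i j * Real.log ((∑ j', V i j') / (a * r i))
      = ∑ i, (∑ j, V i j) * Real.log ((∑ j', V i j') / (a * r i)) := by
    refine Finset.sum_congr rfl fun i _ => ?_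
    rw [← Finset.sum_mul]
  have P2 : ∑ i, ∑ j, V i j * Real.log (a * (∑ i', V i' j) / (T * s j))
      = ∑ j, (∑ i, V i j) * Real.log (a * (∑ i', V i' j) / (T * s j)) := by
    rw [Finset.sum_comm]
    refine Finset.sum_congr rfl fun j _ => ?_
    rw [← Finset.sum_mul]
  have P3 : ∑ i : Fin m, ∑ j : Fin n, r i * s j = (∑ i, r i) * a := by
    rw [Finset.sum_mul]
    refine Finset.sum_congr rfl fun i _ => ?_
    rw [hadef, Finset.mul_sum]
  have P4 : ∑ i, ∑ j, (∑ j', V i j') * (∑ i', V i' j) / T = T := by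
    have : ∀ i : Fin m, ∑ j, (∑ j', V i j') * (∑ i', V i' j) / T = ∑ j', V i j' := by
      intro i
      rw [← Finset.sum_div, ← Finset.mul_sum, hCT, mul_div_assoc,
        div_self hT0.ne', mul_one]
    rw [Finset.sum_congr rfl fun i _ => this i]
  -- key identity
  have key :
      (∑ i, ∑ j, (V i j * Real.log (V i j / (r i * s j)) - V i j + r i * s j))
        - (∑ i, ∑ j,
            (V i j * Real.log (V i j / ((∑ j', V i j') * ((∑ i', V i' j) / T)))
              - V i j + (∑ j', V i j') * ((∑ i', V i' j) / T)))
      = (∑ i, (∑ j, V i j) * Real.log ((∑ j', V i j') / (a * r i)))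
        + (∑ j, (∑ i, V i j) * Real.log (a * (∑ i', V i' j) / (T * s j)))
        + (∑ i, r i) * a - T := by
    rw [step1]
    simp only [Finset.sum_add_distrib, Finset.sum_sub_distrib]
    rw [P1, P2, P3, P4]
  -- lower bounds
  have hA : T - a * (∑ i, r i)
      ≤ ∑ i, (∑ j, V i j) * Real.log ((∑ j', V i j') / (a * r i)) := by
    have h1 : ∀ i : Fin m, (∑ j, V i j) - a * r i
        ≤ (∑ j, V i j) * Real.log ((∑ j', V i j') / (a * r i)) :=
      fun i => sub_le_mul_log (hR i) (mul_pos ha (hr i))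
    calc T - a * (∑ i, r i) = ∑ i, ((∑ j, V i j) - a * r i) := by
          rw [Finset.sum_sub_distrib, ← Finset.mul_sum, ← hTdef]
      _ ≤ _ := Finset.sum_le_sum fun i _ => h1 i
  have hB : 0 ≤ ∑ j, (∑ i, V i j) * Real.log (a * (∑ i', V i' j) / (T * s j)) := by
    have h1 : ∀ j : Fin n, a * (∑ i, V i j) - T * s j
        ≤ a * ((∑ i, V i j) * Real.log (a * (∑ i', V i' j) / (T * s j))) := by
      intro j
      have h2 := sub_le_mul_log (x := a * ∑ i, V i j) (y := T * s j)
        (mul_pos ha (hC j)) (mul_pos hT0 (hs j))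
      calc a * (∑ i, V i j) - T * s j
          ≤ (a * (∑ i, V i j)) * Real.log (a * (∑ i, V i j) / (T * s j)) := h2
        _ = a * ((∑ i, V i j) * Real.log (a * (∑ i', V i' j) / (T * s j))) := by ring
    have h3 : ∑ j, (a * (∑ i, V i j) - T * s j) = 0 := by
      rw [Finset.sum_sub_distrib, ← Finset.mul_sum, ← Finset.mul_sum, hCT, ← hadef]
      ring
    have h4 : (0:ℝ) ≤ a * ∑ j, (∑ i, V i j) * Real.log (a * (∑ i', V i' j) / (T * s j)) := by
      rw [Finset.mul_sum]
      calc (0:ℝ) = ∑ j, (a * (∑ i, V i j) - T * s j) := h3.symm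
        _ ≤ _ := Finset.sum_le_sum fun j _ => h1 j
    nlinarith
  linarith [key, hA, hB]
end

section
/- Along the H-Fac ODE trajectory, with G = ∇f(W), dW/dt = -(1/2)[(u1_nᵀ - G1_n1_nᵀ/n)/√(r1_nᵀ) + (1_mvᵀ - 1_m1_mᵀG/m)/√(1_msᵀ)] - G/√(rsᵀ/1_mᵀr), du/dt = G1_n/n - αu, dv/dt = Gᵀ1_m/m - αv, dr/dt = G²1_n - βr, ds/dt = (Gᵀ)²1_m - βs, and assuming 0 < β ≤ 4α and 1_mᵀr = 1_nᵀs ≥ (r_i + s_j)/2 for all i,j, the Hamiltonian H = f(W) + (n/4)Σ_i u_i²/√r_i + (m/4)Σ_j v_j²/√s_j satisfies dH/dt ≤ 0. -/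
open scoped BigOperators

open Finset Real

/-!
By the chain rule, `dH/dt = ⟪G, dW/dt⟫ + (n/4) Σᵢ d(uᵢ²/√rᵢ)/dt + (m/4) Σⱼ d(vⱼ²/√sⱼ)/dt`.
The only term coupling rows and columns is `-Gᵢⱼ²/√(rᵢsⱼ/S)`; since `√rᵢ + √sⱼ ≤ 2√S` when
`(rᵢ + sⱼ)/2 ≤ S`, it is at most `-Gᵢⱼ²/(2√rᵢ) - Gᵢⱼ²/(2√sⱼ)`. The bound then splits into one
contribution per row and per column. With `a = Σⱼ Gᵢⱼ`, `R = Σⱼ Gᵢⱼ²` and `x = √rᵢ`, the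
contribution of row `i` equals `(a²/n - R + n(β - 4α)uᵢ²/4)/(2x) - n uᵢ² R/(8x³)`, which is
nonpositive by Cauchy–Schwarz (`a² ≤ nR`) and `β ≤ 4α`; likewise for columns.
-/

theorem Real.sqrt_add_sqrt_le_two_sqrt {a b S : ℝ} (ha : 0 ≤ a) (hb : 0 ≤ b)
    (hS : (a + b) / 2 ≤ S) : √a + √b ≤ 2 * √S := by
  have hsq : (√a + √b) ^ 2 ≤ (2 * √S) ^ 2 := by
    nlinarith [sq_nonneg (√a - √b), sq_sqrt ha, sq_sqrt hb, sq_sqrt (show 0 ≤ S by linarith)]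
  exact (pow_le_pow_iff_left₀ (by positivity) (by positivity) two_ne_zero).1 hsq

theorem Real.inv_two_sqrt_add_inv_two_sqrt_le {a b S : ℝ} (ha : 0 < a) (hb : 0 < b)
    (hS : (a + b) / 2 ≤ S) : 1 / (2 * √a) + 1 / (2 * √b) ≤ 1 / √(a * b / S) := by
  have hsa := sqrt_pos.2 ha
  have hsb := sqrt_pos.2 hb
  rw [sqrt_div' _ (by linarith), sqrt_mul ha.le, one_div_div, div_add_div _ _ (by positivity)
    (by positivity), div_le_div_iff₀ (by positivity) (by positivity)]
  nlinarith [sqrt_add_sqrt_le_two_sqrt ha.le hb.le hS, mul_pos hsa hsb]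

theorem HasGradientAt.hasDerivAt_comp {F : Type*} [NormedAddCommGroup F] [InnerProductSpace ℝ F]
    [CompleteSpace F] {f : F → ℝ} {f' : F} {W : ℝ → F} {W' : F} {t : ℝ}
    (hf : HasGradientAt f f' (W t)) (hW : HasDerivAt W W' t) :
    HasDerivAt (fun τ => f (W τ)) (inner ℝ f' W') t :=
  (hasGradientAt_iff_hasFDerivAt.1 hf).comp_hasDerivAt t hW

theorem HasDerivAt.sq_div_sqrt {u r : ℝ → ℝ} {u' r' t : ℝ} (hu : HasDerivAt u u' t)
    (hr : HasDerivAt r r' t) (hrt : 0 < r t) :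
    HasDerivAt (fun τ => u τ ^ 2 / √(r τ))
      (2 * u t * u' / √(r t) - u t ^ 2 * r' / (2 * √(r t) ^ 3)) t := by
  have hx := sqrt_pos.2 hrt
  refine ((hu.fun_pow 2).fun_div (hr.sqrt hrt.ne') hx.ne').congr_deriv ?_
  field_simp
  ring

theorem momentum_dissipation_nonpos {N a R u r α β : ℝ} (hN : 0 ≤ N) (hR : 0 ≤ R)
    (ha : a ^ 2 ≤ N * R) (hr : 0 < r) (hβα : β ≤ 4 * α) :
    (-(1 / 2) * (u - a / N) * a - R / 2) / √r
      + N / 4 * (2 * u * (a / N - α * u) / √r - u ^ 2 * (R - β * r) / (2 * √r ^ 3)) ≤ 0 := by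
  have hx := sqrt_pos.2 hr
  rcases hN.eq_or_lt with rfl | hN
  · obtain rfl : a = 0 := pow_eq_zero_iff two_ne_zero |>.1 (by nlinarith [sq_nonneg a])
    simp only [zero_div, sub_zero, mul_zero, zero_sub, zero_mul, add_zero]
    exact div_nonpos_of_nonpos_of_nonneg (by linarith) hx.le
  have key : (-(1 / 2) * (u - a / N) * a - R / 2) / √r
      + N / 4 * (2 * u * (a / N - α * u) / √r - u ^ 2 * (R - β * r) / (2 * √r ^ 3))
      = (a ^ 2 / N - R + N * (β - 4 * α) * u ^ 2 / 4) / (2 * √r)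
        - N * u ^ 2 * R / (8 * √r ^ 3) := by
    rw [show β * r = β * √r ^ 2 by rw [sq_sqrt hr.le]]
    field_simp
    ring
  have h1 : a ^ 2 / N - R + N * (β - 4 * α) * u ^ 2 / 4 ≤ 0 := by
    have : a ^ 2 / N ≤ R := (div_le_iff₀' hN).2 ha
    nlinarith [mul_nonneg hN.le (sq_nonneg u)]
  rw [key, sub_nonpos]
  exact (div_nonpos_of_nonpos_of_nonneg h1 (by positivity)).trans (by positivity)

theorem coupling_term_le {G P Q r s S : ℝ} (hr : 0 < r) (hs : 0 < s) (hS : (r + s) / 2 ≤ S) :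
    G * (-(1 / 2) * (P / √r + Q / √s) - G / √(r * s / S))
      ≤ (-(1 / 2) * P * G - G ^ 2 / 2) / √r + (-(1 / 2) * Q * G - G ^ 2 / 2) / √s := by
  linear_combination
    mul_le_mul_of_nonneg_left (inv_two_sqrt_add_inv_two_sqrt_le hr hs hS) (sq_nonneg G)

section

variable {ι κ : Type*} [Fintype ι] [Fintype κ]

theorem sum_coupling_term_le (G : ι → κ → ℝ) (P : ι → ℝ) (Q : κ → ℝ) {r : ι → ℝ} {s : κ → ℝ}
    {S : ℝ} (hr : ∀ i, 0 < r i) (hs : ∀ j, 0 < s j) (hS : ∀ i j, (r i + s j) / 2 ≤ S) :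
    ∑ i, ∑ j, G i j * (-(1 / 2) * (P i / √(r i) + Q j / √(s j)) - G i j / √(r i * s j / S))
      ≤ ∑ i, (-(1 / 2) * P i * ∑ j, G i j - (∑ j, G i j ^ 2) / 2) / √(r i)
        + ∑ j, (-(1 / 2) * Q j * ∑ i, G i j - (∑ i, G i j ^ 2) / 2) / √(s j) := by
  calc _ ≤ ∑ i, ∑ j, ((-(1 / 2) * P i * G i j - G i j ^ 2 / 2) / √(r i)
          + (-(1 / 2) * Q j * G i j - G i j ^ 2 / 2) / √(s j)) :=
        sum_le_sum fun i _ => sum_le_sum fun j _ => coupling_term_le (hr i) (hs j) (hS i j)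
    _ = _ := by
      simp only [sum_add_distrib]
      rw [sum_comm (f := fun i j => (-(1 / 2) * Q j * G i j - G i j ^ 2 / 2) / √(s j))]
      simp only [← sum_div, sum_sub_distrib, ← mul_sum]

theorem momentum_dissipation_sum_nonpos (w : κ → ℝ) {u r α β : ℝ} (hr : 0 < r)
    (hβα : β ≤ 4 * α) :
    (-(1 / 2) * (u - (∑ j, w j) / Fintype.card κ) * ∑ j, w j - (∑ j, w j ^ 2) / 2) / √r
      + Fintype.card κ / 4 * (2 * u * ((∑ j, w j) / Fintype.card κ - α * u) / √r
        - u ^ 2 * ((∑ j, w j ^ 2) - β * r) / (2 * √r ^ 3)) ≤ 0 :=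
  momentum_dissipation_nonpos (Nat.cast_nonneg _) (by positivity)
    (by simpa using sq_sum_le_card_mul_sum_sq (s := univ) (f := w)) hr hβα

theorem hamiltonian_dissipation_nonpos (G : ι → κ → ℝ) (u : ι → ℝ) (v : κ → ℝ) {r : ι → ℝ}
    {s : κ → ℝ} {S α β : ℝ} (hr : ∀ i, 0 < r i) (hs : ∀ j, 0 < s j)
    (hS : ∀ i j, (r i + s j) / 2 ≤ S) (hβα : β ≤ 4 * α) :
    ∑ i, ∑ j, G i j * (-(1 / 2) * ((u i - (∑ j', G i j') / Fintype.card κ) / √(r i)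
        + (v j - (∑ i', G i' j) / Fintype.card ι) / √(s j)) - G i j / √(r i * s j / S))
      + Fintype.card κ / 4 * ∑ i, (2 * u i * ((∑ j, G i j) / Fintype.card κ - α * u i) / √(r i)
          - u i ^ 2 * ((∑ j, G i j ^ 2) - β * r i) / (2 * √(r i) ^ 3))
      + Fintype.card ι / 4 * ∑ j, (2 * v j * ((∑ i, G i j) / Fintype.card ι - α * v j) / √(s j)
          - v j ^ 2 * ((∑ i, G i j ^ 2) - β * s j) / (2 * √(s j) ^ 3)) ≤ 0 := by
  have hrows := sum_nonpos fun i (_ : i ∈ univ) =>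
    momentum_dissipation_sum_nonpos (G i) (u := u i) (hr i) hβα
  have hcols := sum_nonpos fun j (_ : j ∈ univ) =>
    momentum_dissipation_sum_nonpos (fun i => G i j) (u := v j) (hs j) hβα
  rw [sum_add_distrib, ← mul_sum] at hrows hcols
  linarith [sum_coupling_term_le G (fun i => u i - (∑ j, G i j) / Fintype.card κ)
    (fun j => v j - (∑ i, G i j) / Fintype.card ι) hr hs hS]

end

theorem stmt_9_general (m n : ℕ)
    (f : EuclideanSpace ℝ (Fin m × Fin n) → ℝ)
    (g : EuclideanSpace ℝ (Fin m × Fin n) → EuclideanSpace ℝ (Fin m × Fin n))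
    (hf : ∀ x, HasGradientAt f (g x) x)
    (α β : ℝ) (hβα : β ≤ 4 * α)
    (W : ℝ → EuclideanSpace ℝ (Fin m × Fin n))
    (u : ℝ → Fin m → ℝ) (v : ℝ → Fin n → ℝ)
    (r : ℝ → Fin m → ℝ) (s : ℝ → Fin n → ℝ)
    (hrpos : ∀ t i, 0 < r t i) (hspos : ∀ t j, 0 < s t j)
    (hSbig : ∀ t i j, (r t i + s t j) / 2 ≤ ∑ i', r t i')
    (hW : ∀ t, HasDerivAt W
      (WithLp.toLp 2 (fun p : Fin m × Fin n =>
        -(1 / 2) * ((u t p.1 - (∑ j, g (W t) (p.1, j)) / n) / Real.sqrt (r t p.1)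
          + (v t p.2 - (∑ i, g (W t) (i, p.2)) / m) / Real.sqrt (s t p.2))
        - g (W t) p / Real.sqrt (r t p.1 * s t p.2 / ∑ i', r t i'))) t)
    (hu : ∀ t, HasDerivAt u
      (fun i : Fin m => (∑ j, g (W t) (i, j)) / n - α * u t i) t)
    (hv : ∀ t, HasDerivAt v
      (fun j : Fin n => (∑ i, g (W t) (i, j)) / m - α * v t j) t)
    (hr : ∀ t, HasDerivAt r
      (fun i : Fin m => (∑ j, (g (W t) (i, j)) ^ 2) - β * r t i) t)
    (hs : ∀ t, HasDerivAt s
      (fun j : Fin n => (∑ i, (g (W t) (i, j)) ^ 2) - β * s t j) t)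
    (t : ℝ) :
    ∃ d : ℝ,
      HasDerivAt (fun τ => f (W τ)
        + (n / 4 : ℝ) * ∑ i, (u τ i) ^ 2 / Real.sqrt (r τ i)
        + (m / 4 : ℝ) * ∑ j, (v τ j) ^ 2 / Real.sqrt (s τ j)) d t ∧
      d ≤ 0 := by
  have hu_sum := HasDerivAt.fun_sum fun i (_ : i ∈ univ) =>
    (hasDerivAt_pi.1 (hu t) i).sq_div_sqrt (hasDerivAt_pi.1 (hr t) i) (hrpos t i)
  have hv_sum := HasDerivAt.fun_sum fun j (_ : j ∈ univ) =>
    (hasDerivAt_pi.1 (hv t) j).sq_div_sqrt (hasDerivAt_pi.1 (hs t) j) (hspos t j)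
  refine ⟨_, (((hf (W t)).hasDerivAt_comp (hW t)).add (hu_sum.const_mul _)).add
    (hv_sum.const_mul _), ?_⟩
  rw [real_inner_comm]
  simp only [PiLp.inner_apply, RCLike.inner_apply, conj_trivial, Fintype.sum_prod_type]
  simpa only [Fintype.card_fin] using hamiltonian_dissipation_nonpos (fun i j => g (W t) (i, j))
    (u t) (v t) (hrpos t) (hspos t) (hSbig t) hβα

/-- Along the H-Fac ODE trajectory with `0 < β ≤ 4α` and the symmetry condition
`1_mᵀr = 1_nᵀs ≥ (r_i + s_j)/2`, the Hamiltonian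
`H = f(W) + (n/4)Σ_i u_i²/√r_i + (m/4)Σ_j v_j²/√s_j` satisfies `dH/dt ≤ 0`. -/
theorem stmt_9 (m n : ℕ) (hm : 0 < m) (hn : 0 < n)
    (f : EuclideanSpace ℝ (Fin m × Fin n) → ℝ)
    (g : EuclideanSpace ℝ (Fin m × Fin n) → EuclideanSpace ℝ (Fin m × Fin n))
    (hf : ∀ x, HasGradientAt f (g x) x)
    (α β : ℝ) (hα : 0 < α) (hβ : 0 < β) (hβα : β ≤ 4 * α)
    (W : ℝ → EuclideanSpace ℝ (Fin m × Fin n))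
    (u : ℝ → Fin m → ℝ) (v : ℝ → Fin n → ℝ)
    (r : ℝ → Fin m → ℝ) (s : ℝ → Fin n → ℝ)
    (hrpos : ∀ t i, 0 < r t i) (hspos : ∀ t j, 0 < s t j)
    (hsym : ∀ t, ∑ i, r t i = ∑ j, s t j)
    (hSbig : ∀ t i j, (r t i + s t j) / 2 ≤ ∑ i', r t i')
    (hW : ∀ t, HasDerivAt W
      (WithLp.toLp 2 (fun p : Fin m × Fin n =>
        -(1 / 2) * ((u t p.1 - (∑ j, g (W t) (p.1, j)) / n) / Real.sqrt (r t p.1)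
          + (v t p.2 - (∑ i, g (W t) (i, p.2)) / m) / Real.sqrt (s t p.2))
        - g (W t) p / Real.sqrt (r t p.1 * s t p.2 / ∑ i', r t i'))) t)
    (hu : ∀ t, HasDerivAt u
      (fun i : Fin m => (∑ j, g (W t) (i, j)) / n - α * u t i) t)
    (hv : ∀ t, HasDerivAt v
      (fun j : Fin n => (∑ i, g (W t) (i, j)) / m - α * v t j) t)
    (hr : ∀ t, HasDerivAt r
      (fun i : Fin m => (∑ j, (g (W t) (i, j)) ^ 2) - β * r t i) t)
    (hs : ∀ t, HasDerivAt s
      (fun j : Fin n => (∑ i, (g (W t) (i, j)) ^ 2) - β * s t j) t)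
    (t : ℝ) :
    ∃ d : ℝ,
      HasDerivAt (fun τ => f (W τ)
        + (n / 4 : ℝ) * ∑ i, (u τ i) ^ 2 / Real.sqrt (r τ i)
        + (m / 4 : ℝ) * ∑ j, (v τ j) ^ 2 / Real.sqrt (s τ j)) d t ∧
      d ≤ 0 :=
  stmt_9_general m n f g hf α β hβα W u v r s hrpos hspos hSbig hW hu hv hr hs t
end

section
/- If f : ℝ^{m×n} → ℝ is differentiable and lower bounded, and (W_t, M_t) solves the momentum ODE dW/dt = M, dM/dt = -γM - ∇f(W) with γ > 0, then ∫_0^∞ ‖M_t‖²_F dt ≤ (H(W_0, M_0) - inf f)/γ, where H(W,M) = f(W) + ‖M‖²_F/2. -/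
open MeasureTheory
open scoped RealInnerProductSpace

/-!
The energy `H(W, M) = f(W) + ‖M‖²/2` is a Lyapunov function of the damped flow: along a
solution `d/dt H = ⟪∇f(W), M⟫ + ⟪M, -γM - ∇f(W)⟫ = -γ‖M‖²`. Integrating over `[0, T]` gives
`γ ∫₀ᵀ ‖M‖² = H(0) - H(T) ≤ H(0) - inf f`, uniformly in `T`, and letting `T → ∞` bounds the
improper integral.
-/

theorem setIntegral_Ioi_le_of_intervalIntegral_le {φ : ℝ → ℝ} {a C : ℝ}
    (hφ : Continuous φ) (hφ_nonneg : ∀ t, 0 ≤ φ t) (hC : ∀ T, ∫ t in a..T, φ t ≤ C) :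
    ∫ t in Set.Ioi a, φ t ≤ C := by
  have hint : IntegrableOn φ (Set.Ioi a) := by
    refine integrableOn_Ioi_of_intervalIntegral_norm_bounded C a
      (fun T => (hφ.intervalIntegrable a T).1) Filter.tendsto_id (.of_forall fun T => ?_)
    simpa only [Real.norm_of_nonneg (hφ_nonneg _)] using hC T
  exact le_of_tendsto (intervalIntegral_tendsto_integral_Ioi a hint Filter.tendsto_id)
    (.of_forall hC)

noncomputable def energy {E : Type*} [Norm E] (f : E → ℝ) (w m : E) : ℝ := f w + ‖m‖ ^ 2 / 2

theorem sInf_range_le_energy {E : Type*} [Norm E] {f : E → ℝ} (hbdd : BddBelow (Set.range f))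
    (w m : E) :
    sInf (Set.range f) ≤ energy f w m := by
  have hw : sInf (Set.range f) ≤ f w := csInf_le hbdd ⟨w, rfl⟩
  unfold energy
  linarith [sq_nonneg ‖m‖]

section DampedFlow

variable {E : Type*} [NormedAddCommGroup E] [InnerProductSpace ℝ E] [CompleteSpace E]
  {f : E → ℝ} {g : E → E} {γ : ℝ} {W M : ℝ → E}
  (hf : ∀ x, HasGradientAt f (g x) x) (hW : ∀ t, HasDerivAt W (M t) t)
  (hM : ∀ t, HasDerivAt M (-γ • M t - g (W t)) t)
include hf hW hM

theorem hasDerivAt_energy (t : ℝ) :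
    HasDerivAt (fun s => energy f (W s) (M s)) (-(γ * ‖M t‖ ^ 2)) t := by
  have hfW : HasDerivAt (fun s => f (W s)) ⟪g (W t), M t⟫ t := by
    have h := (hf (W t)).hasFDerivAt.comp_hasDerivAt t (hW t)
    simp only [InnerProductSpace.toDual_apply_apply] at h
    exact h
  have hMM : HasDerivAt (fun s => ⟪M s, M s⟫ / 2)
      ((⟪M t, -γ • M t - g (W t)⟫ + ⟪-γ • M t - g (W t), M t⟫) / 2) t :=
    ((hM t).inner ℝ (hM t)).div_const 2
  have hE : (fun s => energy f (W s) (M s)) = fun s => f (W s) + ⟪M s, M s⟫ / 2 := by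
    funext s
    simp only [energy, real_inner_self_eq_norm_sq]
  rw [hE]
  refine (hfW.add hMM).congr_deriv ?_
  simp only [inner_sub_left, inner_sub_right, real_inner_smul_left, real_inner_smul_right,
    real_inner_self_eq_norm_sq, real_inner_comm (M t) (g (W t))]
  ring

theorem mul_intervalIntegral_norm_sq_eq_energy_sub (T : ℝ) :
    γ * ∫ t in (0 : ℝ)..T, ‖M t‖ ^ 2 = energy f (W 0) (M 0) - energy f (W T) (M T) := by
  have hMc : Continuous M := continuous_iff_continuousAt.2 fun t => (hM t).continuousAt
  have hdiss := intervalIntegral.integral_eq_sub_of_hasDerivAt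
    (fun t _ => hasDerivAt_energy hf hW hM t)
    ((continuous_const.mul (hMc.norm.pow 2)).neg.intervalIntegrable 0 T)
  rw [intervalIntegral.integral_neg, intervalIntegral.integral_const_mul] at hdiss
  linarith

theorem intervalIntegral_norm_sq_le (hbdd : BddBelow (Set.range f)) (hγ : 0 < γ) (T : ℝ) :
    ∫ t in (0 : ℝ)..T, ‖M t‖ ^ 2 ≤ (energy f (W 0) (M 0) - sInf (Set.range f)) / γ := by
  rw [le_div_iff₀ hγ, mul_comm]
  linarith [mul_intervalIntegral_norm_sq_eq_energy_sub hf hW hM T,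
    sInf_range_le_energy hbdd (W T) (M T)]

end DampedFlow

/-- If `f` is differentiable and lower bounded and `(W,M)` solves the momentum
ODE, then `∫_0^∞ ‖M_t‖²_F dt ≤ (H(W_0,M_0) - inf f)/γ`. -/
theorem stmt_13 (m n : ℕ)
    (f : EuclideanSpace ℝ (Fin m × Fin n) → ℝ)
    (g : EuclideanSpace ℝ (Fin m × Fin n) → EuclideanSpace ℝ (Fin m × Fin n))
    (hf : ∀ x, HasGradientAt f (g x) x)
    (hbdd : BddBelow (Set.range f))
    (γ : ℝ) (hγ : 0 < γ)
    (W M : ℝ → EuclideanSpace ℝ (Fin m × Fin n))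
    (hW : ∀ t, HasDerivAt W (M t) t)
    (hM : ∀ t, HasDerivAt M (-γ • M t - g (W t)) t) :
    ∫ t in Set.Ioi (0 : ℝ), ‖M t‖ ^ 2
      ≤ (f (W 0) + ‖M 0‖ ^ 2 / 2 - sInf (Set.range f)) / γ := by
  have hMc : Continuous M := continuous_iff_continuousAt.2 fun t => (hM t).continuousAt
  exact setIntegral_Ioi_le_of_intervalIntegral_le (hMc.norm.pow 2) (fun t => by positivity)
    (intervalIntegral_norm_sq_le hf hW hM hbdd hγ)
end

section
/- If V ∈ ℝ^{m×n} has rank 1 with strictly positive entries, then the Adafactor reconstruction is exact: with r = V1_n and s = Vᵀ1_m, the matrix r sᵀ/(1_mᵀ r) equals V. -/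
open scoped BigOperators

/-- If `V` has rank 1 with strictly positive entries, then the Adafactor
reconstruction `r sᵀ/(1_mᵀ r)` with `r = V1_n`, `s = Vᵀ1_m` equals `V`. -/
theorem stmt_19 (m n : ℕ) (V : Matrix (Fin m) (Fin n) ℝ)
    (hV : ∀ i j, 0 < V i j) (hrank : V.rank = 1) :
    ∀ i j, (∑ j', V i j') * (∑ i', V i' j) / (∑ i', ∑ j', V i' j') = V i j := by
  -- cross relation from rank 1
  have hcross : ∀ i i' j j', V i j * V i' j' = V i j' * V i' j := by
    have hle : (LinearMap.range V.mulVecLin).IsPrincipal := by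
      rw [← Submodule.finrank_le_one_iff_isPrincipal]
      exact le_of_eq hrank
    obtain ⟨v₀, hv₀⟩ := hle
    have hcol : ∀ j, ∃ c : ℝ, ∀ i, V i j = c * v₀ i := by
      intro j
      have hmem : (fun i => V i j) ∈ LinearMap.range V.mulVecLin := by
        refine ⟨Pi.single j 1, ?_⟩
        ext i
        simp [Matrix.mulVecLin, Matrix.mulVec, dotProduct, Pi.single_apply,
          Finset.sum_ite_eq', mul_comm]
      rw [hv₀, Submodule.mem_span_singleton] at hmem
      obtain ⟨c, hc⟩ := hmem
      exact ⟨c, fun i => by rw [← congrFun hc i]; simp [mul_comm]⟩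
    intro i i' j j'
    obtain ⟨c, hc⟩ := hcol j
    obtain ⟨c', hc'⟩ := hcol j'
    rw [hc, hc', hc, hc']
    ring
  have hn : 0 < n := by
    rcases Nat.eq_zero_or_pos n with h | h
    · exfalso; subst h
      have h0 : V.mulVecLin = 0 := by
        ext v i; simp [Matrix.mulVecLin_apply, Matrix.mulVec, dotProduct]
      rw [Matrix.rank, h0, LinearMap.range_zero, finrank_bot] at hrank
      simp at hrank
    · exact h
  have hm : 0 < m := by
    rcases Nat.eq_zero_or_pos m with h | h
    · exfalso; subst h
      have h0 : LinearMap.range V.mulVecLin = ⊥ := Subsingleton.elim _ _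
      rw [Matrix.rank, h0, finrank_bot] at hrank
      simp at hrank
    · exact h
  have : Nonempty (Fin m) := ⟨⟨0, hm⟩⟩
  have : Nonempty (Fin n) := ⟨⟨0, hn⟩⟩
  intro i j
  have htot : 0 < ∑ i', ∑ j', V i' j' :=
    Finset.sum_pos (fun i' _ => Finset.sum_pos (fun j' _ => hV i' j')
      Finset.univ_nonempty) Finset.univ_nonempty
  have hmul : (∑ j', V i j') * (∑ i', V i' j) = V i j * (∑ i', ∑ j', V i' j') := by
    rw [Finset.sum_mul_sum, Finset.mul_sum]
    rw [Finset.sum_comm]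
    refine Finset.sum_congr rfl fun i' _ => ?_
    rw [Finset.mul_sum]
    exact Finset.sum_congr rfl fun j' _ => hcross i i' j' j ▸ rfl
  rw [hmul, mul_div_assoc, div_self htot.ne', mul_one]
end
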